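/- arXiv:2605.25490 — 4 statements merged into one kernel-verified Lean document; each statement's English description precedes it below -/
import Mathlib

section
/- Let f : ℝⁿ → ℝ be convex with minimizer x*, and let (x_k) be generated by x_{k+1} = x_k − h_k g_k where g_k ∈ ∂f(x_k) and h_k > 0. Then for every k, min_{0 ≤ ℓ ≤ k} f(x_ℓ) − f(x*) ≤ (‖x_0 − x*‖² + Σ_{ℓ=0}^{k} h_ℓ² ‖g_ℓ‖²) / (2 Σ_{ℓ=0}^{k} h_ℓ). -/
/-!
Expanding the square along a step, the subgradient inequality gives
`‖x_{ℓ+1} - x*‖² ≤ ‖x_ℓ - x*‖² - 2 h_ℓ (f x_ℓ - f x*) + h_ℓ² ‖g_ℓ‖²`.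
Summing telescopes the distances; dropping `‖x_{k+1} - x*‖² ≥ 0` and bounding each `f x_ℓ`
below by the running minimum leaves `2 (∑ h_ℓ) (min f x_ℓ - f x*) ≤ ‖x_0 - x*‖² + ∑ h_ℓ² ‖g_ℓ‖²`.
-/

open Finset

section SubgradientMethod

variable {E : Type*} [NormedAddCommGroup E] [InnerProductSpace ℝ E]

theorem norm_subgradient_step_sub_sq_le {f : E → ℝ} {x g z : E} {t : ℝ} (ht : 0 ≤ t)
    (hg : f z ≥ f x + inner ℝ g (z - x)) :
    ‖x - t • g - z‖ ^ 2 ≤ ‖x - z‖ ^ 2 - 2 * t * (f x - f z) + t ^ 2 * ‖g‖ ^ 2 := by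
  have hgap : f x - f z ≤ inner ℝ g (x - z) := by
    rw [← neg_sub z x, inner_neg_right]
    linarith
  have hexpand : ‖x - t • g - z‖ ^ 2 =
      ‖x - z‖ ^ 2 - 2 * t * inner ℝ g (x - z) + t ^ 2 * ‖g‖ ^ 2 := by
    rw [sub_right_comm, norm_sub_sq_real, norm_smul, real_inner_smul_right, real_inner_comm,
      Real.norm_of_nonneg ht]
    ring
  rw [hexpand]
  nlinarith

theorem le_sub_sum_add_sum_of_le_sub_add {d a b : ℕ → ℝ}
    (hd : ∀ ℓ, d (ℓ + 1) ≤ d ℓ - a ℓ + b ℓ) (k : ℕ) :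
    d k ≤ d 0 - ∑ ℓ ∈ range k, a ℓ + ∑ ℓ ∈ range k, b ℓ := by
  have htele : ∑ ℓ ∈ range k, (d (ℓ + 1) - d ℓ) ≤ ∑ ℓ ∈ range k, (b ℓ - a ℓ) :=
    sum_le_sum fun ℓ _ => by linarith [hd ℓ]
  rw [sum_range_sub, sum_sub_distrib] at htele
  linarith

theorem sum_mul_inf'_sub_le_sum_mul_sub {ι : Type*} {s : Finset ι} (hs : s.Nonempty)
    {w v : ι → ℝ} (hw : ∀ i ∈ s, 0 ≤ w i) (c : ℝ) :
    (∑ i ∈ s, w i) * (s.inf' hs v - c) ≤ ∑ i ∈ s, w i * (v i - c) := by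
  rw [sum_mul]
  exact sum_le_sum fun i hi =>
    mul_le_mul_of_nonneg_left (sub_le_sub_right (inf'_le v hi) c) (hw i hi)

theorem subgradient_method_two_mul_sum_mul_gap_le {f : E → ℝ} {xstar : E} {x g : ℕ → E}
    {h : ℕ → ℝ} (hh : ∀ k, 0 ≤ h k) (hg : ∀ k, f xstar ≥ f (x k) + inner ℝ (g k) (xstar - x k))
    (hrec : ∀ k, x (k + 1) = x k - h k • g k) (k : ℕ) :
    2 * (∑ ℓ ∈ range (k + 1), h ℓ) *
        ((range (k + 1)).inf' nonempty_range_add_one (fun ℓ => f (x ℓ)) - f xstar) ≤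
      ‖x 0 - xstar‖ ^ 2 + ∑ ℓ ∈ range (k + 1), h ℓ ^ 2 * ‖g ℓ‖ ^ 2 := by
  have hdist := le_sub_sum_add_sum_of_le_sub_add
    (d := fun ℓ => ‖x ℓ - xstar‖ ^ 2) (a := fun ℓ => 2 * h ℓ * (f (x ℓ) - f xstar))
    (b := fun ℓ => h ℓ ^ 2 * ‖g ℓ‖ ^ 2)
    (fun ℓ => hrec ℓ ▸ norm_subgradient_step_sub_sq_le (hh ℓ) (hg ℓ)) (k + 1)
  have hmin := sum_mul_inf'_sub_le_sum_mul_sub (nonempty_range_add_one (n := k))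
    (v := fun ℓ => f (x ℓ)) (fun ℓ _ => mul_nonneg zero_le_two (hh ℓ)) (f xstar)
  rw [mul_sum]
  linarith [sq_nonneg ‖x (k + 1) - xstar‖]

end SubgradientMethod

theorem subgradient_method_basic_bound {n : ℕ}
    (f : EuclideanSpace ℝ (Fin n) → ℝ)
    (xstar : EuclideanSpace ℝ (Fin n))
    (x g : ℕ → EuclideanSpace ℝ (Fin n)) (h : ℕ → ℝ)
    (hh : ∀ k, 0 < h k)
    (hgk : ∀ k w, f w ≥ f (x k) + (inner ℝ (g k) (w - x k) : ℝ))
    (hrec : ∀ k, x (k + 1) = x k - h k • g k) (k : ℕ) :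
    (Finset.range (k + 1)).inf' (by simp) (fun ℓ => f (x ℓ)) - f xstar ≤
      (‖x 0 - xstar‖ ^ 2 + ∑ ℓ ∈ Finset.range (k + 1), (h ℓ) ^ 2 * ‖g ℓ‖ ^ 2) /
        (2 * ∑ ℓ ∈ Finset.range (k + 1), h ℓ) := by
  have hsum : 0 < ∑ ℓ ∈ range (k + 1), h ℓ := sum_pos (fun ℓ _ => hh ℓ) nonempty_range_add_one
  rw [le_div_iff₀ (by positivity), mul_comm]
  exact subgradient_method_two_mul_sum_mul_gap_le (fun ℓ => (hh ℓ).le) (fun ℓ => hgk ℓ xstar)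
    hrec k
end

section
/- Let f : ℝⁿ → ℝ be convex with a minimizer x*, and let (x_k) be generated by x_{k+1} = x_k − (t_k/‖g_k‖) g_k with g_k ∈ ∂f(x_k), g_k ≠ 0, and t_k > 0 satisfying Σ t_k = ∞ and Σ t_k² < ∞. Then liminf_{k→∞} f(x_k) = f(x*). -/
open Filter Topology

/-!
If `f (x k) ≥ f x⋆ + ε` for all large `k`, continuity of `f` at `x⋆` gives a ball of radius
`δ > 0` around `x⋆` inside the sublevel set `{f ≤ f (x k)}`. The subgradient inequality at the
point of that ball in direction `g k` then forces `⟪g k, x k - x⋆⟫ ≥ δ ‖g k‖`, so each normalized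
step decreases `‖x k - x⋆‖²` by at least `2 δ t k - t k ²`. Since `∑ t k ²` is finite, this makes
`∑ t k` finite, a contradiction.
-/

lemma summable_of_le_sub_mul_add {d t s : ℕ → ℝ} {c : ℝ} (hc : 0 < c) (hd : ∀ k, 0 ≤ d k)
    (ht : ∀ k, 0 ≤ t k) (hs : Summable s) (hs0 : ∀ k, 0 ≤ s k)
    (h : ∀ k, d (k + 1) ≤ d k - c * t k + s k) : Summable t := by
  have htelescope : ∀ m, c * ∑ k ∈ Finset.range m, t k + d m ≤ d 0 + ∑ k ∈ Finset.range m, s k := by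
    intro m
    induction m with
    | zero => simp
    | succ m ih =>
      rw [Finset.sum_range_succ, Finset.sum_range_succ]
      linarith [h m]
  refine summable_of_sum_range_le ht (c := (d 0 + ∑' k, s k) / c) fun m => ?_
  rw [le_div_iff₀ hc, mul_comm]
  linarith [htelescope m, hd m, hs.sum_le_tsum (Finset.range m) fun k _ => hs0 k]

lemma liminf_eq_of_forall_frequently_lt {ι : Type*} {l : Filter ι} {u : ι → ℝ} {a : ℝ}
    (hle : ∀ᶠ i in l, a ≤ u i) (hlt : ∀ ε > 0, ∃ᶠ i in l, u i < a + ε) : liminf u l = a := by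
  refine le_antisymm (le_of_forall_pos_le_add fun ε hε => ?_) (le_liminf_of_le ?_ hle)
  · exact liminf_le_of_frequently_le ((hlt ε hε).mono fun _ h => h.le) ⟨a, hle⟩
  · refine ⟨a + 1, fun b hb => ?_⟩
    obtain ⟨i, hbi, hia⟩ := ((eventually_map.1 hb).and_frequently (hlt 1 one_pos)).exists
    linarith

section NormalizedSubgradient

variable {E : Type*} [NormedAddCommGroup E] [InnerProductSpace ℝ E]

lemma mul_norm_le_inner_sub_of_closedBall_subset_sublevel {f : E → ℝ} {x z g : E} {δ : ℝ}
    (hδ : 0 ≤ δ) (hg : ∀ w, f x + inner ℝ g (w - x) ≤ f w)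
    (hball : Metric.closedBall z δ ⊆ {y | f y ≤ f x}) :
    δ * ‖g‖ ≤ inner ℝ g (x - z) := by
  set u := ‖g‖⁻¹ • g
  have hu : ‖u‖ ≤ 1 := by
    rw [norm_smul, norm_inv, norm_norm]
    exact inv_mul_le_one_of_le₀ le_rfl (norm_nonneg g)
  have hmem : z + δ • u ∈ Metric.closedBall z δ := by
    rw [Metric.mem_closedBall, dist_eq_norm, add_sub_cancel_left, norm_smul,
      Real.norm_of_nonneg hδ]
    exact mul_le_of_le_one_right hδ hu
  have hgu : inner ℝ g u = ‖g‖ := by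
    rw [real_inner_smul_right, real_inner_self_eq_norm_sq, sq, ← mul_assoc]
    rcases eq_or_ne ‖g‖ 0 with h0 | h0
    · simp [h0]
    · rw [inv_mul_cancel₀ h0, one_mul]
  have hsplit : inner ℝ g (z + δ • u - x) = δ * ‖g‖ - inner ℝ g (x - z) := by
    rw [show z + δ • u - x = δ • u - (x - z) by abel, inner_sub_right, real_inner_smul_right, hgu]
  have hfy : f (z + δ • u) ≤ f x := hball hmem
  linarith [hg (z + δ • u)]

lemma norm_sub_normalized_step_sq_le {x z g : E} {t δ : ℝ} (ht : 0 ≤ t) (hg : g ≠ 0)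
    (h : δ * ‖g‖ ≤ inner ℝ g (x - z)) :
    ‖x - (t / ‖g‖) • g - z‖ ^ 2 ≤ ‖x - z‖ ^ 2 - 2 * δ * t + t ^ 2 := by
  have hg' : 0 < ‖g‖ := norm_pos_iff.2 hg
  have hstep : ‖(t / ‖g‖) • g‖ = t := by
    rw [norm_smul, Real.norm_of_nonneg (div_nonneg ht hg'.le), div_mul_cancel₀ t hg'.ne']
  have hinner : t * δ ≤ inner ℝ (x - z) ((t / ‖g‖) • g) := by
    rw [real_inner_smul_right, real_inner_comm, div_mul_eq_mul_div, le_div_iff₀ hg', mul_assoc]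
    exact mul_le_mul_of_nonneg_left h ht
  rw [show x - (t / ‖g‖) • g - z = (x - z) - (t / ‖g‖) • g by abel, norm_sub_sq_real, hstep]
  linarith

theorem frequently_lt_add_of_normalized_subgradient {f : E → ℝ} {z : E} (hf : ContinuousAt f z)
    {x g : ℕ → E} {t : ℕ → ℝ} (ht : ∀ k, 0 ≤ t k) (ht1 : ¬ Summable t)
    (ht2 : Summable fun k => t k ^ 2) (hgk : ∀ k w, f (x k) + inner ℝ (g k) (w - x k) ≤ f w)
    (hg0 : ∀ k, g k ≠ 0) (hrec : ∀ k, x (k + 1) = x k - (t k / ‖g k‖) • g k)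
    {ε : ℝ} (hε : 0 < ε) : ∃ᶠ k in atTop, f (x k) < f z + ε := by
  by_contra hfreq
  obtain ⟨N, hN⟩ := eventually_atTop.1 (not_frequently.1 hfreq)
  obtain ⟨δ, hδ, hball⟩ := Metric.nhds_basis_closedBall.eventually_iff.1
    (hf.eventually (gt_mem_nhds (lt_add_of_pos_right (f z) hε)))
  have hdescent : ∀ k, ‖x (k + 1 + N) - z‖ ^ 2
      ≤ ‖x (k + N) - z‖ ^ 2 - 2 * δ * t (k + N) + t (k + N) ^ 2 := by
    intro k
    have hsublevel : Metric.closedBall z δ ⊆ {y | f y ≤ f (x (k + N))} := fun y hy =>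
      ((hball hy).trans_le (not_lt.1 (hN (k + N) (Nat.le_add_left N k)))).le
    rw [Nat.add_right_comm, hrec]
    exact norm_sub_normalized_step_sq_le (ht _) (hg0 _)
      (mul_norm_le_inner_sub_of_closedBall_subset_sublevel hδ.le (hgk _) hsublevel)
  exact ht1 <| (summable_nat_add_iff N).1 <|
    summable_of_le_sub_mul_add (d := fun k => ‖x (k + N) - z‖ ^ 2) (mul_pos two_pos hδ) (fun _ => sq_nonneg _) (fun _ => ht _)
      ((summable_nat_add_iff N).2 ht2) (fun _ => sq_nonneg _) hdescent

end NormalizedSubgradient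

theorem normalized_subgradient_liminf {n : ℕ}
    (f : EuclideanSpace ℝ (Fin n) → ℝ) (hf : ConvexOn ℝ Set.univ f)
    (xstar : EuclideanSpace ℝ (Fin n)) (hmin : ∀ w, f xstar ≤ f w)
    (x g : ℕ → EuclideanSpace ℝ (Fin n)) (t : ℕ → ℝ)
    (ht : ∀ k, 0 < t k)
    (ht1 : ¬ Summable t) (ht2 : Summable (fun k => (t k) ^ 2))
    (hgk : ∀ k w, f w ≥ f (x k) + (inner ℝ (g k) (w - x k) : ℝ))
    (hg0 : ∀ k, g k ≠ 0)
    (hrec : ∀ k, x (k + 1) = x k - (t k / ‖g k‖) • g k) :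
    Filter.liminf (fun k => f (x k)) atTop = f xstar := by
  have hcont : ContinuousAt f xstar :=
    (hf.continuousOn isOpen_univ).continuousAt univ_mem
  exact liminf_eq_of_forall_frequently_lt (Eventually.of_forall fun k => hmin (x k))
    fun ε hε => frequently_lt_add_of_normalized_subgradient hcont (fun k => (ht k).le) ht1 ht2
      hgk hg0 hrec hε
end

section
/- Let f : ℝⁿ → ℝ be convex with a minimizer x*, and let (x_k) be generated by x_{k+1} = x_k − (t_k/‖g_k‖) g_k with g_k ∈ ∂f(x_k), g_k ≠ 0, t_k > 0, and Σ t_k² < ∞. Then the sequence (x_k) is bounded; in fact ‖x_k − x*‖² ≤ ‖x_0 − x*‖² + Σ_{ℓ=0}^{∞} t_ℓ² for all k. -/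
/-!
The subgradient inequality at `x k` evaluated at the minimizer gives
`⟪g k, x k - xstar⟫ ≥ f (x k) - f xstar ≥ 0`, so the step `-(t k / ‖g k‖) • g k`, whose length is
at most `t k`, never points away from `xstar` and the cross term in
`‖x (k + 1) - xstar‖² = ‖x k - xstar‖² - 2⟪x k - xstar, step⟫ + ‖step‖²` can be dropped. Hence
`‖x (k + 1) - xstar‖² ≤ ‖x k - xstar‖² + t k ^ 2`, and telescoping bounds the partial sums by the
full series.
-/

open scoped RealInnerProductSpace

section InnerProductSpace

variable {E : Type*} [NormedAddCommGroup E] [InnerProductSpace ℝ E]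

lemma inner_sub_nonneg_of_subgradient {f : E → ℝ} {x xstar g : E}
    (hg : ∀ w, f w ≥ f x + ⟪g, w - x⟫) (hmin : f xstar ≤ f x) : 0 ≤ ⟪g, x - xstar⟫ := by
  have hsub := hg xstar
  have hflip : ⟪g, xstar - x⟫ = -⟪g, x - xstar⟫ := by
    rw [← inner_neg_right, neg_sub]
  linarith

lemma norm_sub_sub_sq_le_of_inner_nonneg {y z d : E} (h : 0 ≤ ⟪y - z, d⟫) :
    ‖y - d - z‖ ^ 2 ≤ ‖y - z‖ ^ 2 + ‖d‖ ^ 2 := by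
  rw [sub_right_comm, norm_sub_sq_real]
  linarith

lemma norm_div_norm_smul_sq_le (t : ℝ) (g : E) : ‖(t / ‖g‖) • g‖ ^ 2 ≤ t ^ 2 := by
  rcases eq_or_ne g 0 with rfl | hg
  · simpa using sq_nonneg t
  · rw [norm_smul, norm_div, norm_norm, div_mul_cancel₀ _ (norm_ne_zero_iff.mpr hg),
      Real.norm_eq_abs, sq_abs]

end InnerProductSpace

lemma le_add_tsum_of_succ_le_add {a b : ℕ → ℝ} (hb : ∀ k, 0 ≤ b k) (hs : Summable b)
    (h : ∀ k, a (k + 1) ≤ a k + b k) (k : ℕ) : a k ≤ a 0 + ∑' l, b l := by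
  have partial_sum : a k ≤ a 0 + ∑ l ∈ Finset.range k, b l := by
    induction k with
    | zero => simp
    | succ m ih =>
      rw [Finset.sum_range_succ]
      linarith [h m]
  linarith [hs.sum_le_tsum (Finset.range k) (fun l _ => hb l)]

theorem normalized_subgradient_bounded_general {n : ℕ}
    (f : EuclideanSpace ℝ (Fin n) → ℝ)
    (xstar : EuclideanSpace ℝ (Fin n)) (hmin : ∀ w, f xstar ≤ f w)
    (x g : ℕ → EuclideanSpace ℝ (Fin n)) (t : ℕ → ℝ)
    (ht : ∀ k, 0 < t k)
    (ht2 : Summable (fun k => (t k) ^ 2))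
    (hgk : ∀ k w, f w ≥ f (x k) + (inner ℝ (g k) (w - x k) : ℝ))
    (hrec : ∀ k, x (k + 1) = x k - (t k / ‖g k‖) • g k) :
    ∀ k, ‖x k - xstar‖ ^ 2 ≤ ‖x 0 - xstar‖ ^ 2 + ∑' ℓ, (t ℓ) ^ 2 := by
  refine le_add_tsum_of_succ_le_add (fun ℓ => sq_nonneg (t ℓ)) ht2 fun k => ?_
  have hdescent : 0 ≤ ⟪x k - xstar, (t k / ‖g k‖) • g k⟫ := by
    rw [real_inner_smul_right, real_inner_comm]
    have := ht k
    exact mul_nonneg (by positivity) (inner_sub_nonneg_of_subgradient (hgk k) (hmin (x k)))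
  calc ‖x (k + 1) - xstar‖ ^ 2
      ≤ ‖x k - xstar‖ ^ 2 + ‖(t k / ‖g k‖) • g k‖ ^ 2 := by
        rw [hrec k]
        exact norm_sub_sub_sq_le_of_inner_nonneg hdescent
    _ ≤ ‖x k - xstar‖ ^ 2 + t k ^ 2 := by
        linarith [norm_div_norm_smul_sq_le (t k) (g k)]

theorem normalized_subgradient_bounded {n : ℕ}
    (f : EuclideanSpace ℝ (Fin n) → ℝ) (hf : ConvexOn ℝ Set.univ f)
    (xstar : EuclideanSpace ℝ (Fin n)) (hmin : ∀ w, f xstar ≤ f w)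
    (x g : ℕ → EuclideanSpace ℝ (Fin n)) (t : ℕ → ℝ)
    (ht : ∀ k, 0 < t k)
    (ht2 : Summable (fun k => (t k) ^ 2))
    (hgk : ∀ k w, f w ≥ f (x k) + (inner ℝ (g k) (w - x k) : ℝ))
    (hg0 : ∀ k, g k ≠ 0)
    (hrec : ∀ k, x (k + 1) = x k - (t k / ‖g k‖) • g k) :
    ∀ k, ‖x k - xstar‖ ^ 2 ≤ ‖x 0 - xstar‖ ^ 2 + ∑' ℓ, (t ℓ) ^ 2 :=
  normalized_subgradient_bounded_general f xstar hmin x g t ht ht2 hgk hrec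
end

section
/- Let f : ℝⁿ → ℝ be convex with a minimizer x*, and let (x_k) be generated by the normalized subgradient method x_{k+1} = x_k − (t_k/‖g_k‖) g_k with g_k ∈ ∂f(x_k), g_k ≠ 0, and t_k > 0 satisfying Σ t_k = ∞ and Σ t_k² < ∞. Then (x_k) converges to some minimizer of f. -/
/-!
Every minimizer `z` is a quasi-Fejér point of the iteration: expanding the step gives
`‖x (k+1) - z‖² = ‖x k - z‖² - 2 (t k / ‖g k‖) ⟪g k, x k - z⟫ + t k²`, and the middle term is
nonnegative since `⟪g k, x k - z⟫ ≥ f (x k) - f z ≥ 0`. As `∑ t k² < ∞`, the distance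
`‖x k - z‖` converges and `∑ (t k / ‖g k‖) ⟪g k, x k - z⟫ < ∞`. So the iterates are bounded,
hence so are the subgradients, and `∑ t k (f (x k) - f z) < ∞`; with `∑ t k = ∞` this makes
`f z` a cluster value of `f ∘ x`, and compactness yields a cluster point `y` of `x` that is again
a minimizer. Applied to `z = y`, `‖x k - y‖` converges, and its limit is `0` because `y` is a
cluster point.
-/

open Filter Topology Finset Metric

theorem tendsto_and_summable_of_le_sub_add {a u e : ℕ → ℝ} (ha : ∀ k, 0 ≤ a k)
    (hu : ∀ k, 0 ≤ u k) (he : Summable e) (hrec : ∀ k, a (k + 1) ≤ a k - u k + e k) :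
    (∃ L, Tendsto a atTop (𝓝 L)) ∧ Summable u := by
  set U : ℕ → ℝ := fun k => ∑ j ∈ range k, u j
  set E : ℕ → ℝ := fun k => ∑ j ∈ range k, e j
  obtain ⟨B, hB⟩ := he.hasSum.tendsto_sum_nat.bddAbove_range
  have hEB : ∀ k, E k ≤ B := fun k => hB ⟨k, rfl⟩
  have hanti : Antitone fun k => a k + U k - E k := antitone_nat_of_succ_le fun k => by
    simp only [U, E, sum_range_succ]
    linarith [hrec k]
  have hU : ∀ k, U k ≤ a 0 + B := fun k => by
    have h := hanti (Nat.zero_le k)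
    simp only [U, E, range_zero, sum_empty] at h
    linarith [ha k, hEB k]
  have hUnonneg : ∀ k, 0 ≤ U k := fun k => sum_nonneg fun j _ => hu j
  have hbdd : BddBelow (Set.range fun k => a k + U k - E k) :=
    ⟨-B, by rintro _ ⟨k, rfl⟩; linarith [ha k, hUnonneg k, hEB k]⟩
  have hsum : Summable u := summable_of_sum_range_le hu hU
  refine ⟨⟨(⨅ k, a k + U k - E k) - ∑' j, u j + ∑' j, e j, ?_⟩, hsum⟩
  have h := ((tendsto_atTop_ciInf hanti hbdd).sub hsum.hasSum.tendsto_sum_nat).add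
    he.hasSum.tendsto_sum_nat
  exact h.congr fun k => by ring

theorem mapClusterPt_of_summable_mul_sub {t c : ℕ → ℝ} {m : ℝ} (ht : ∀ k, 0 ≤ t k)
    (ht1 : ¬ Summable t) (hc : ∀ k, m ≤ c k) (hsum : Summable fun k => t k * (c k - m)) :
    MapClusterPt m atTop c := by
  refine nhds_basis_ball.mapClusterPt_iff_frequently.2 fun ε hε => ?_
  by_contra h
  refine ht1 (Summable.of_norm_bounded_eventually_nat (hsum.mul_left ε⁻¹) ?_)
  filter_upwards [not_frequently.1 h] with k hk
  rw [mem_ball, Real.dist_eq, abs_of_nonneg (sub_nonneg.2 (hc k)), not_lt] at hk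
  rw [Real.norm_of_nonneg (ht k), ← div_eq_inv_mul, le_div_iff₀' hε, mul_comm]
  exact mul_le_mul_of_nonneg_left hk (ht k)

theorem IsCompact.exists_mapClusterPt_of_mapClusterPt_comp {ι X Y : Type*} [TopologicalSpace X]
    [TopologicalSpace Y] [T2Space Y] {K : Set X} (hK : IsCompact K) {F : Filter ι} {u : ι → X}
    (hu : ∀ᶠ i in F, u i ∈ K) {f : X → Y} (hf : Continuous f) {c : Y}
    (hc : MapClusterPt c F (f ∘ u)) : ∃ y ∈ K, f y = c ∧ MapClusterPt y F u := by
  set F' := comap (f ∘ u) (𝓝 c) ⊓ F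
  have : NeBot F' := neBot_inf_comap_iff_map'.2 hc
  obtain ⟨y, hyK, hy⟩ := hK (f := map u F') (le_principal_iff.2 (hu.filter_mono inf_le_right))
  have hy' : MapClusterPt y F' u := hy
  refine ⟨y, hyK, ?_, hy'.mono inf_le_right⟩
  have hfc : Tendsto (f ∘ u) F' (𝓝 c) := tendsto_comap.mono_left inf_le_left
  exact eq_of_nhds_neBot ((hy'.continuousAt_comp hf.continuousAt).clusterPt.mono hfc)

theorem tendsto_of_tendsto_dist_of_mapClusterPt {ι X : Type*} [PseudoMetricSpace X]
    {F : Filter ι} {u : ι → X} {y : X} {r : ℝ} (hr : Tendsto (fun k => dist (u k) y) F (𝓝 r))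
    (hy : MapClusterPt y F u) : Tendsto u F (𝓝 y) := by
  have h : MapClusterPt (dist y y) F (fun k => dist (u k) y) :=
    hy.continuousAt_comp (f := fun z => dist z y) (continuous_id.dist continuous_const).continuousAt
  rw [dist_self] at h
  obtain rfl : 0 = r := eq_of_nhds_neBot (h.clusterPt.mono hr)
  exact tendsto_iff_dist_tendsto_zero.2 hr

section InnerProductSpace

variable {E : Type*} [NormedAddCommGroup E] [InnerProductSpace ℝ E]

theorem norm_le_sub_of_subgradient {f : E → ℝ} {x g : E} (hg : ∀ w, f w ≥ f x + inner ℝ g (w - x)) :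
    ‖g‖ ≤ f (x + ‖g‖⁻¹ • g) - f x := by
  have h := hg (x + ‖g‖⁻¹ • g)
  rw [add_sub_cancel_left, real_inner_smul_right, real_inner_self_eq_norm_sq, sq,
    ← mul_assoc, inv_mul_mul_self] at h
  linarith

theorem sub_le_inner_of_subgradient {f : E → ℝ} {x g : E}
    (hg : ∀ w, f w ≥ f x + inner ℝ g (w - x)) (z : E) : f x - f z ≤ inner ℝ g (x - z) := by
  have h := hg z
  rw [← neg_sub, inner_neg_right] at h
  linarith

theorem IsCompact.exists_norm_subgradient_le [ProperSpace E] {f : E → ℝ} (hf : Continuous f)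
    {K : Set E} (hK : IsCompact K) :
    ∃ G, ∀ x ∈ K, ∀ g : E, (∀ w, f w ≥ f x + inner ℝ g (w - x)) → ‖g‖ ≤ G := by
  obtain ⟨C, hC⟩ := (hK.cthickening (r := 1)).exists_bound_of_continuousOn hf.continuousOn
  refine ⟨2 * C, fun x hx g hg => ?_⟩
  have hstep : x + ‖g‖⁻¹ • g ∈ cthickening 1 K := by
    refine mem_cthickening_of_dist_le _ x 1 K hx ?_
    rw [dist_eq_norm, add_sub_cancel_left, norm_smul, norm_inv, norm_norm]
    exact inv_mul_le_one
  have h1 := hC _ hstep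
  have h2 := hC x (self_subset_cthickening K hx)
  rw [Real.norm_eq_abs, abs_le] at h1 h2
  linarith [norm_le_sub_of_subgradient hg]

theorem norm_sub_normalized_step_sq {g : E} (hg : g ≠ 0) (x z : E) (t : ℝ) :
    ‖x - (t / ‖g‖) • g - z‖ ^ 2 = ‖x - z‖ ^ 2 - 2 * (t / ‖g‖) * inner ℝ g (x - z) + t ^ 2 := by
  have hg' : ‖g‖ ≠ 0 := norm_ne_zero_iff.2 hg
  rw [sub_right_comm, norm_sub_sq_real, real_inner_smul_right, real_inner_comm, norm_smul,
    Real.norm_eq_abs, mul_pow, sq_abs, div_pow]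
  field_simp

structure IsNormalizedSubgradientMethod (f : E → ℝ) (x g : ℕ → E) (t : ℕ → ℝ) : Prop where
  subgradient : ∀ k w, f w ≥ f (x k) + inner ℝ (g k) (w - x k)
  ne_zero : ∀ k, g k ≠ 0
  step : ∀ k, x (k + 1) = x k - (t k / ‖g k‖) • g k

namespace IsNormalizedSubgradientMethod

variable {f : E → ℝ} {x g : ℕ → E} {t : ℕ → ℝ}

theorem tendsto_dist_and_summable (hx : IsNormalizedSubgradientMethod f x g t)
    (ht : ∀ k, 0 ≤ t k) (ht2 : Summable fun k => t k ^ 2) {z : E} (hz : ∀ w, f z ≤ f w) :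
    (∃ r, Tendsto (fun k => dist (x k) z) atTop (𝓝 r)) ∧
      Summable fun k => t k / ‖g k‖ * inner ℝ (g k) (x k - z) := by
  have hu : ∀ k, 0 ≤ 2 * (t k / ‖g k‖ * inner ℝ (g k) (x k - z)) := fun k => by
    have hinner : 0 ≤ inner ℝ (g k) (x k - z) :=
      (sub_nonneg.2 (hz (x k))).trans (sub_le_inner_of_subgradient (hx.subgradient k) z)
    have htk := ht k
    positivity
  have hdecr : ∀ k, dist (x (k + 1)) z ^ 2 ≤
      dist (x k) z ^ 2 - 2 * (t k / ‖g k‖ * inner ℝ (g k) (x k - z)) + t k ^ 2 := fun k => by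
    rw [dist_eq_norm, dist_eq_norm, hx.step, norm_sub_normalized_step_sq (hx.ne_zero k)]
    linarith
  obtain ⟨⟨L, hL⟩, hsum⟩ :=
    tendsto_and_summable_of_le_sub_add (fun k => sq_nonneg (dist (x k) z)) hu ht2 hdecr
  refine ⟨⟨√L, ?_⟩, (summable_mul_left_iff two_ne_zero).1 hsum⟩
  simpa only [Real.sqrt_sq dist_nonneg] using hL.sqrt

theorem exists_forall_mem_closedBall (hx : IsNormalizedSubgradientMethod f x g t)
    (ht : ∀ k, 0 ≤ t k) (ht2 : Summable fun k => t k ^ 2) {z : E} (hz : ∀ w, f z ≤ f w) :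
    ∃ R, ∀ k, x k ∈ closedBall z R := by
  obtain ⟨⟨r, hr⟩, -⟩ := hx.tendsto_dist_and_summable ht ht2 hz
  obtain ⟨R, hR⟩ := hr.bddAbove_range
  exact ⟨R, fun k => hR ⟨k, rfl⟩⟩

theorem summable_mul_sub [ProperSpace E] (hx : IsNormalizedSubgradientMethod f x g t)
    (hf : Continuous f) (ht : ∀ k, 0 ≤ t k) (ht2 : Summable fun k => t k ^ 2) {z : E}
    (hz : ∀ w, f z ≤ f w) : Summable fun k => t k * (f (x k) - f z) := by
  obtain ⟨-, hsum⟩ := hx.tendsto_dist_and_summable ht ht2 hz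
  obtain ⟨R, hR⟩ := hx.exists_forall_mem_closedBall ht ht2 hz
  obtain ⟨G, hG⟩ := (isCompact_closedBall z R).exists_norm_subgradient_le hf
  refine Summable.of_nonneg_of_le (fun k => mul_nonneg (ht k) (sub_nonneg.2 (hz _)))
    (fun k => ?_) (hsum.mul_left G)
  have hgk := hG _ (hR k) _ (hx.subgradient k)
  have hgap := sub_le_inner_of_subgradient (hx.subgradient k) z
  have hg0 : ‖g k‖ ≠ 0 := norm_ne_zero_iff.2 (hx.ne_zero k)
  calc t k * (f (x k) - f z) = t k / ‖g k‖ * (‖g k‖ * (f (x k) - f z)) := by field_simp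
    _ ≤ t k / ‖g k‖ * (G * inner ℝ (g k) (x k - z)) := by
        have htk := ht k
        gcongr
        · exact sub_nonneg.2 (hz _)
        · exact (norm_nonneg _).trans hgk
    _ = G * (t k / ‖g k‖ * inner ℝ (g k) (x k - z)) := by ring

end IsNormalizedSubgradientMethod

end InnerProductSpace

theorem normalized_subgradient_converges {n : ℕ}
    (f : EuclideanSpace ℝ (Fin n) → ℝ) (hf : ConvexOn ℝ Set.univ f)
    (xstar : EuclideanSpace ℝ (Fin n)) (hmin : ∀ w, f xstar ≤ f w)
    (x g : ℕ → EuclideanSpace ℝ (Fin n)) (t : ℕ → ℝ)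
    (ht : ∀ k, 0 < t k)
    (ht1 : ¬ Summable t) (ht2 : Summable (fun k => (t k) ^ 2))
    (hgk : ∀ k w, f w ≥ f (x k) + (inner ℝ (g k) (w - x k) : ℝ))
    (hg0 : ∀ k, g k ≠ 0)
    (hrec : ∀ k, x (k + 1) = x k - (t k / ‖g k‖) • g k) :
    ∃ y : EuclideanSpace ℝ (Fin n), (∀ w, f y ≤ f w) ∧ Tendsto x atTop (𝓝 y) := by
  have hx : IsNormalizedSubgradientMethod f x g t := ⟨hgk, hg0, hrec⟩
  have ht0 : ∀ k, 0 ≤ t k := fun k => (ht k).le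
  have hcont : Continuous f := continuousOn_univ.1 (hf.continuousOn isOpen_univ)
  obtain ⟨R, hR⟩ := hx.exists_forall_mem_closedBall ht0 ht2 hmin
  have hclust : MapClusterPt (f xstar) atTop (f ∘ x) :=
    mapClusterPt_of_summable_mul_sub ht0 ht1 (fun k => hmin (x k))
      (hx.summable_mul_sub hcont ht0 ht2 hmin)
  obtain ⟨y, -, hfy, hy⟩ := (isCompact_closedBall xstar R).exists_mapClusterPt_of_mapClusterPt_comp
    (Eventually.of_forall hR) hcont hclust
  have hymin : ∀ w, f y ≤ f w := hfy ▸ hmin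
  obtain ⟨⟨r, hr⟩, -⟩ := hx.tendsto_dist_and_summable ht0 ht2 hymin
  exact ⟨y, hymin, tendsto_of_tendsto_dist_of_mapClusterPt hr hy⟩
end
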